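/- Let k ≥ 4 be an integer, K0, C0 > 0, K1 = (2k+1)!!·K0, γ = k/3 − 1/2, p ∈ (2,3), B* > 0 and C_g > 0. Let u0 : (0,∞) → (0,∞) be smooth with u0(x) = x + (K0 + ε0(x))·x^{2k−2} where ε0(x) → 0 as x → 0⁺. Let g : (0,∞) → ℝ satisfy |g(y)| ≤ C_g·y^{−5}·(1+y^{4k−2}) for all y > 0. For M > 1 define v_out^±(y,τ) = y + (K0 + ε0(y·e^{τ/2}))·e^{3γτ}·y^{2k−2} ± M·e^{3γτ}·y^{2k−4}, and define v_δ^±(y,τ) = y + (K1 ± δ)·e^{3γτ}·φ_k(y) ± (B*·K1²·e^{6γτ}·g(y) + e^{(p+1)γτ}·y^{−p}). Then there exists M0 > 1, depending only on k, K0, C_g, B* and p, such that for every M ≥ M0 and every δ ∈ (0, K1/2), setting Y_δ = 2·√((2k+1)!!·M/δ), there exists τ_δ ∈ ℝ with: for all τ ≤ τ_δ, v_out^+(Y_δ/4, τ) > v_δ^+(Y_δ/4, τ), v_out^−(Y_δ/4, τ) < v_δ^−(Y_δ/4, τ), v_out^+(Y_δ, τ) < v_δ^+(Y_δ, τ), and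 v_out^−(Y_δ, τ) > v_δ^−(Y_δ, τ). -/

import Mathlib

open Filter Set

/-- The eigenfunction `φ_k(y) = y^{-2} Σ_{n=0}^k (binom(k,n)/(2n+1)!!) y^{2n}`. -/
noncomputable def phik (k : ℕ) (y : ℝ) : ℝ :=
  y ^ (-2 : ℤ) * ∑ n ∈ Finset.range (k + 1),
    ((k.choose n : ℝ) / (Nat.doubleFactorial (2 * n + 1) : ℝ)) * y ^ (2 * n)

/-- The outer barriers expressed in intermediate variables, with sign `ε = ±1`. -/
noncomputable def vout (k : ℕ) (K0 M γ : ℝ) (ε0 : ℝ → ℝ) (ε y τ : ℝ) : ℝ :=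
  y + (K0 + ε0 (y * Real.exp (τ / 2))) * Real.exp (3 * γ * τ) * y ^ (2 * k - 2)
    + ε * (M * Real.exp (3 * γ * τ) * y ^ (2 * k - 4))

/-- The intermediate-region barriers `v_δ^±(y,τ)`, with sign `ε = ±1`. -/
noncomputable def vmed (k : ℕ) (K1 γ Bstar p : ℝ) (g : ℝ → ℝ) (δ ε y τ : ℝ) : ℝ :=
  y + (K1 + ε * δ) * Real.exp (3 * γ * τ) * phik k y
    + ε * (Bstar * K1 ^ 2 * Real.exp (6 * γ * τ) * g y
        + Real.exp ((p + 1) * γ * τ) * y ^ (-p))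

/-- The difference of the two barriers, rescaled by `e^{-3γτ}`, converges as `τ → -∞`
to an explicit polynomial expression in `y`. -/
lemma tendsto_diff_aux (k : ℕ) (K0 K1 M γ δ Bstar p : ℝ) (ε0 g : ℝ → ℝ)
    (hγ : 0 < γ) (hp : 2 < p)
    (hε0 : Tendsto ε0 (nhdsWithin 0 (Set.Ioi 0)) (nhds 0))
    (y : ℝ) (hy : 0 < y) (ε : ℝ) :
    Tendsto (fun τ => (vout k K0 M γ ε0 ε y τ - vmed k K1 γ Bstar p g δ ε y τ)
        / Real.exp (3 * γ * τ)) atBot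
      (nhds (K0 * y ^ (2 * k - 2) + ε * (M * y ^ (2 * k - 4)) - (K1 + ε * δ) * phik k y)) := by
  have heq : (fun τ => (vout k K0 M γ ε0 ε y τ - vmed k K1 γ Bstar p g δ ε y τ)
      / Real.exp (3 * γ * τ)) = fun τ =>
      (K0 + ε0 (y * Real.exp (τ / 2))) * y ^ (2 * k - 2) + ε * (M * y ^ (2 * k - 4))
        - (K1 + ε * δ) * phik k y
        - ε * (Bstar * K1 ^ 2 * Real.exp (3 * γ * τ) * g y
            + Real.exp ((p - 2) * γ * τ) * y ^ (-p)) := by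
    funext τ
    have h6 : Real.exp (6 * γ * τ) = Real.exp (3 * γ * τ) * Real.exp (3 * γ * τ) := by
      rw [← Real.exp_add]; ring_nf
    have hp1 : Real.exp ((p + 1) * γ * τ) = Real.exp (3 * γ * τ) * Real.exp ((p - 2) * γ * τ) := by
      rw [← Real.exp_add]; ring_nf
    unfold vout vmed
    rw [h6, hp1]
    field_simp
    ring
  rw [heq]
  have hτ2 : Tendsto (fun τ : ℝ => τ / 2) atBot atBot :=
    tendsto_id.atBot_div_const (by norm_num)
  have hexp2 : Tendsto (fun τ : ℝ => y * Real.exp (τ / 2)) atBot (nhdsWithin 0 (Set.Ioi 0)) := by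
    apply tendsto_nhdsWithin_of_tendsto_nhds_of_eventually_within
    · have := (Real.tendsto_exp_atBot.comp hτ2).const_mul y
      simpa using this
    · exact Eventually.of_forall fun τ => mul_pos hy (Real.exp_pos _)
  have h1 : Tendsto (fun τ => ε0 (y * Real.exp (τ / 2))) atBot (nhds 0) := hε0.comp hexp2
  have h2 : Tendsto (fun τ : ℝ => Real.exp (3 * γ * τ)) atBot (nhds 0) := by
    apply Real.tendsto_exp_atBot.comp
    exact Tendsto.const_mul_atBot (by linarith) tendsto_id
  have h3 : Tendsto (fun τ : ℝ => Real.exp ((p - 2) * γ * τ)) atBot (nhds 0) := by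
    apply Real.tendsto_exp_atBot.comp
    exact Tendsto.const_mul_atBot (by nlinarith) tendsto_id
  have final : Tendsto (fun τ =>
      (K0 + ε0 (y * Real.exp (τ / 2))) * y ^ (2 * k - 2) + ε * (M * y ^ (2 * k - 4))
        - (K1 + ε * δ) * phik k y
        - ε * (Bstar * K1 ^ 2 * Real.exp (3 * γ * τ) * g y
            + Real.exp ((p - 2) * γ * τ) * y ^ (-p))) atBot
      (nhds ((K0 + 0) * y ^ (2 * k - 2) + ε * (M * y ^ (2 * k - 4))
        - (K1 + ε * δ) * phik k y
        - ε * (Bstar * K1 ^ 2 * 0 * g y + 0 * y ^ (-p)))) := by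
    exact ((((tendsto_const_nhds.add h1).mul_const _).add tendsto_const_nhds).sub
      tendsto_const_nhds).sub
      ((((h2.const_mul _).mul_const _).add (h3.mul_const _)).const_mul _)
  simpa using final

/-- Key algebraic identity for the limit expression. -/
lemma limit_eq_aux (k : ℕ) (hk : 4 ≤ k) (K0 K1 M δ : ℝ)
    (hK1 : K1 = (Nat.doubleFactorial (2 * k + 1) : ℝ) * K0)
    (ε y : ℝ) (hy : 0 < y) :
    K0 * y ^ (2 * k - 2) + ε * (M * y ^ (2 * k - 4)) - (K1 + ε * δ) * phik k y
      = ε * (M * y ^ (2 * k - 4))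
        - ε * (δ / (Nat.doubleFactorial (2 * k + 1) : ℝ)) * y ^ (2 * k - 2)
        - (K1 + ε * δ) * ((y ^ 2)⁻¹ * ∑ n ∈ Finset.range k,
            ((k.choose n : ℝ) / (Nat.doubleFactorial (2 * n + 1) : ℝ)) * y ^ (2 * n)) := by
  have hyne : y ≠ 0 := hy.ne'
  have hyne : y ≠ 0 := hy.ne'
  have hdd : (0:ℝ) < (Nat.doubleFactorial (2 * k + 1) : ℝ) := by
    exact_mod_cast Nat.doubleFactorial_pos _
  unfold phik
  rw [Finset.sum_range_succ]
  have hz : y ^ (-2 : ℤ) = (y ^ 2)⁻¹ := by rw [zpow_neg, zpow_two, sq]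
  have hkk : (k.choose k : ℝ) = 1 := by simp
  have h2k : y ^ (2 * k) = y ^ (2 * k - 2) * y ^ 2 := by rw [← pow_add]; congr 1; omega
  rw [hz, hkk, h2k, hK1]
  field_simp
  ring

set_option maxHeartbeats 1600000 in
/-- Matching of the outer and intermediate barriers: they cross in the interval
`(Y_δ/4, Y_δ)` where `Y_δ = 2 √((2k+1)!! M / δ)`. -/
theorem stmt_11
    (k : ℕ) (hk : 4 ≤ k) (K0 C0 : ℝ) (hK0 : 0 < K0) (hC0 : 0 < C0)
    (K1 : ℝ) (hK1 : K1 = (Nat.doubleFactorial (2 * k + 1) : ℝ) * K0)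
    (γ : ℝ) (hγ : γ = (k : ℝ) / 3 - 1 / 2)
    (p : ℝ) (hp : p ∈ Set.Ioo (2:ℝ) 3)
    (Bstar : ℝ) (hBstar : 0 < Bstar)
    (Cg : ℝ) (hCg : 0 < Cg)
    (u0 ε0 : ℝ → ℝ)
    (hu0smooth : ContDiffOn ℝ (⊤ : ℕ∞) u0 (Set.Ioi 0))
    (hu0pos : ∀ x > (0:ℝ), 0 < u0 x)
    (hu0 : ∀ x > (0:ℝ), u0 x = x + (K0 + ε0 x) * x ^ (2 * k - 2))
    (hε0 : Filter.Tendsto ε0 (nhdsWithin 0 (Set.Ioi 0)) (nhds 0))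
    (g : ℝ → ℝ)
    (hgbd : ∀ y > (0:ℝ), |g y| ≤ Cg * y ^ (-5 : ℤ) * (1 + y ^ (4 * k - 2))) :
    ∃ M0 > (1:ℝ), ∀ M ≥ M0, ∀ δ ∈ Set.Ioo (0:ℝ) (K1 / 2),
      ∀ Y : ℝ, Y = 2 * Real.sqrt ((Nat.doubleFactorial (2 * k + 1) : ℝ) * M / δ) →
        ∃ τδ : ℝ, ∀ τ ≤ τδ,
          vout k K0 M γ ε0 1 (Y / 4) τ > vmed k K1 γ Bstar p g δ 1 (Y / 4) τ ∧
          vout k K0 M γ ε0 (-1) (Y / 4) τ < vmed k K1 γ Bstar p g δ (-1) (Y / 4) τ ∧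
          vout k K0 M γ ε0 1 Y τ < vmed k K1 γ Bstar p g δ 1 Y τ ∧
          vout k K0 M γ ε0 (-1) Y τ > vmed k K1 γ Bstar p g δ (-1) Y τ := by
  have hd : (0:ℝ) < (Nat.doubleFactorial (2 * k + 1) : ℝ) := by
    exact_mod_cast Nat.doubleFactorial_pos _
  have hK1pos : 0 < K1 := by rw [hK1]; exact mul_pos hd hK0
  have hγpos : 0 < γ := by
    have : (4:ℝ) ≤ (k:ℝ) := by exact_mod_cast hk
    rw [hγ]; linarith
  have h2kpos : (0:ℝ) < 2 ^ k := by positivity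
  refine ⟨2 + 2 * K0 + 2 * K1 * 2 ^ k, by nlinarith, ?_⟩
  intro M hM δ hδ Y hY
  obtain ⟨hδ0, hδK⟩ := hδ
  have hMbig : 2 * K1 * 2 ^ k < M := by nlinarith
  have hM2K0 : 2 * K0 ≤ M := by nlinarith
  have hMpos : 0 < M := by nlinarith
  -- basic facts about Y
  have hYsq : Y ^ 2 = 4 * ((Nat.doubleFactorial (2 * k + 1) : ℝ) * M / δ) := by
    rw [hY, mul_pow, Real.sq_sqrt (by positivity)]; ring
  have hYpos : 0 < Y := by
    rw [hY]
    have : 0 < Real.sqrt ((Nat.doubleFactorial (2 * k + 1) : ℝ) * M / δ) :=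
      Real.sqrt_pos.mpr (by positivity)
    linarith
  have hY4 : 4 ≤ Y := by
    have h4δ : 4 * δ ≤ (Nat.doubleFactorial (2 * k + 1) : ℝ) * M := by
      have h1 : δ < (Nat.doubleFactorial (2 * k + 1) : ℝ) * K0 / 2 := by
        rw [hK1] at hδK; linarith
      nlinarith [mul_le_mul_of_nonneg_left hM2K0 hd.le]
    have h16 : (16:ℝ) ≤ Y ^ 2 := by
      rw [hYsq]
      have h4 : (4:ℝ) ≤ (Nat.doubleFactorial (2 * k + 1) : ℝ) * M / δ :=
        (le_div_iff₀ hδ0).mpr (by linarith)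
      linarith
    nlinarith
  have hqpos : 0 < Y / 4 := by linarith
  have hq1 : 1 ≤ Y / 4 := by linarith
  have hY1 : 1 ≤ Y := by linarith
  -- bounds on the truncated sum
  have hSpos : ∀ y : ℝ, 0 < y → 0 < ∑ n ∈ Finset.range k,
      ((k.choose n : ℝ) / (Nat.doubleFactorial (2 * n + 1) : ℝ)) * y ^ (2 * n) := by
    intro y hy
    apply Finset.sum_pos
    · intro n hn
      have hn' : n ≤ k := le_of_lt (Finset.mem_range.mp hn)
      have hc : 0 < (k.choose n : ℝ) := by exact_mod_cast Nat.choose_pos hn'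
      have hdf : (0:ℝ) < ((2 * n + 1).doubleFactorial : ℝ) := by
        exact_mod_cast Nat.doubleFactorial_pos _
      exact mul_pos (div_pos hc hdf) (pow_pos hy _)
    · exact ⟨0, Finset.mem_range.mpr (by omega)⟩
  have hSle : ∀ y : ℝ, 1 ≤ y → (∑ n ∈ Finset.range k,
      ((k.choose n : ℝ) / (Nat.doubleFactorial (2 * n + 1) : ℝ)) * y ^ (2 * n))
        ≤ 2 ^ k * y ^ (2 * k - 2) := by
    intro y hy1
    have hy0 : (0:ℝ) < y := lt_of_lt_of_le one_pos hy1
    calc (∑ n ∈ Finset.range k,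
        ((k.choose n : ℝ) / (Nat.doubleFactorial (2 * n + 1) : ℝ)) * y ^ (2 * n))
        ≤ ∑ n ∈ Finset.range k, (k.choose n : ℝ) * y ^ (2 * k - 2) := by
          apply Finset.sum_le_sum
          intro n hn
          have hn' : n < k := Finset.mem_range.mp hn
          have hdf1 : (1:ℝ) ≤ ((2 * n + 1).doubleFactorial : ℝ) := by
            exact_mod_cast Nat.doubleFactorial_pos (2 * n + 1)
          have hc0 : (0:ℝ) ≤ (k.choose n : ℝ) := by positivity
          have h1 : (k.choose n : ℝ) / ((2 * n + 1).doubleFactorial : ℝ) ≤ (k.choose n : ℝ) :=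
            div_le_self hc0 hdf1
          have h2 : y ^ (2 * n) ≤ y ^ (2 * k - 2) := pow_le_pow_right₀ hy1 (by omega)
          exact mul_le_mul h1 h2 (by positivity) hc0
      _ = (∑ n ∈ Finset.range k, (k.choose n : ℝ)) * y ^ (2 * k - 2) := by
          rw [Finset.sum_mul]
      _ ≤ 2 ^ k * y ^ (2 * k - 2) := by
          apply mul_le_mul_of_nonneg_right _ (by positivity)
          have hsum : ∑ n ∈ Finset.range k, k.choose n ≤ ∑ n ∈ Finset.range (k + 1), k.choose n :=
            Finset.sum_le_sum_of_subset (Finset.range_subset_range.mpr (by omega))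
          rw [Nat.sum_range_choose] at hsum
          calc (∑ n ∈ Finset.range k, (k.choose n : ℝ))
              = ((∑ n ∈ Finset.range k, k.choose n : ℕ) : ℝ) := by push_cast; ring
            _ ≤ ((2 ^ k : ℕ) : ℝ) := by exact_mod_cast hsum
            _ = 2 ^ k := by push_cast; ring
  have hpow_split : ∀ y : ℝ, y ^ (2 * k - 2) = y ^ (2 * k - 4) * y ^ 2 := by
    intro y; rw [← pow_add]; congr 1; omega
  have hTle : ∀ y : ℝ, 1 ≤ y → (y ^ 2)⁻¹ * (∑ n ∈ Finset.range k,
      ((k.choose n : ℝ) / (Nat.doubleFactorial (2 * n + 1) : ℝ)) * y ^ (2 * n))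
        ≤ 2 ^ k * y ^ (2 * k - 4) := by
    intro y hy1
    have hy0 : (0:ℝ) < y := lt_of_lt_of_le one_pos hy1
    have h := mul_le_mul_of_nonneg_left (hSle y hy1) (inv_nonneg.mpr (sq_nonneg y))
    calc (y ^ 2)⁻¹ * (∑ n ∈ Finset.range k,
        ((k.choose n : ℝ) / (Nat.doubleFactorial (2 * n + 1) : ℝ)) * y ^ (2 * n))
        ≤ (y ^ 2)⁻¹ * (2 ^ k * y ^ (2 * k - 2)) := h
      _ = 2 ^ k * y ^ (2 * k - 4) := by
          rw [hpow_split y]; field_simp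
  have hTpos : ∀ y : ℝ, 0 < y → 0 < (y ^ 2)⁻¹ * (∑ n ∈ Finset.range k,
      ((k.choose n : ℝ) / (Nat.doubleFactorial (2 * n + 1) : ℝ)) * y ^ (2 * n)) := by
    intro y hy
    exact mul_pos (inv_pos.mpr (by positivity)) (hSpos y hy)
  -- eventual comparison lemmas
  have evgt : ∀ y : ℝ, 0 < y → ∀ ε : ℝ,
      0 < K0 * y ^ (2 * k - 2) + ε * (M * y ^ (2 * k - 4)) - (K1 + ε * δ) * phik k y →
      ∀ᶠ τ in atBot, vmed k K1 γ Bstar p g δ ε y τ < vout k K0 M γ ε0 ε y τ := by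
    intro y hy ε hL
    have ht := tendsto_diff_aux k K0 K1 M γ δ Bstar p ε0 g hγpos hp.1 hε0 y hy ε
    have hev := (tendsto_order.1 ht).1 0 hL
    filter_upwards [hev] with τ hτ
    have hepos := Real.exp_pos (3 * γ * τ)
    have h0 : 0 < vout k K0 M γ ε0 ε y τ - vmed k K1 γ Bstar p g δ ε y τ := by
      rcases div_pos_iff.mp hτ with ⟨h, _⟩ | ⟨_, h⟩
      · exact h
      · linarith
    linarith
  have evlt : ∀ y : ℝ, 0 < y → ∀ ε : ℝ,
      K0 * y ^ (2 * k - 2) + ε * (M * y ^ (2 * k - 4)) - (K1 + ε * δ) * phik k y < 0 →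
      ∀ᶠ τ in atBot, vout k K0 M γ ε0 ε y τ < vmed k K1 γ Bstar p g δ ε y τ := by
    intro y hy ε hL
    have ht := tendsto_diff_aux k K0 K1 M γ δ Bstar p ε0 g hγpos hp.1 hε0 y hy ε
    have hev := (tendsto_order.1 ht).2 0 hL
    filter_upwards [hev] with τ hτ
    have hepos := Real.exp_pos (3 * γ * τ)
    have h0 : vout k K0 M γ ε0 ε y τ - vmed k K1 γ Bstar p g δ ε y τ < 0 := by
      rcases div_neg_iff.mp hτ with ⟨_, h'⟩ | ⟨h, _⟩
      · linarith
      · exact h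
    linarith
  -- power identities at the two points
  have hApos : 0 < Y ^ (2 * k - 4) := pow_pos hYpos _
  have hBpos : 0 < (Y / 4) ^ (2 * k - 4) := pow_pos hqpos _
  have hYid : (δ / (Nat.doubleFactorial (2 * k + 1) : ℝ)) * Y ^ (2 * k - 2)
      = 4 * M * Y ^ (2 * k - 4) := by
    rw [hpow_split Y, hYsq]; field_simp
  have hq2 : (Y / 4) ^ 2 = (Nat.doubleFactorial (2 * k + 1) : ℝ) * M / (4 * δ) := by
    rw [div_pow, hYsq]; field_simp [hδ0.ne']
  have hqid : (δ / (Nat.doubleFactorial (2 * k + 1) : ℝ)) * (Y / 4) ^ (2 * k - 2)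
      = M / 4 * (Y / 4) ^ (2 * k - 4) := by
    rw [hpow_split (Y / 4), hq2]; field_simp [hδ0.ne', hd.ne']
  -- the four sign facts
  have case1 : 0 < K0 * (Y / 4) ^ (2 * k - 2) + 1 * (M * (Y / 4) ^ (2 * k - 4))
      - (K1 + 1 * δ) * phik k (Y / 4) := by
    rw [limit_eq_aux k hk K0 K1 M δ hK1 1 (Y / 4) hqpos]
    have hT := hTle (Y / 4) hq1
    have hTp := hTpos (Y / 4) hqpos
    nlinarith [hqid, mul_lt_mul_of_pos_right hMbig hBpos,
      mul_le_mul_of_nonneg_left hT (show (0:ℝ) ≤ K1 + δ by linarith),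
      mul_pos h2kpos hBpos,
      mul_pos (show (0:ℝ) < K1 / 2 - δ by linarith) (mul_pos h2kpos hBpos)]
  have case2 : K0 * (Y / 4) ^ (2 * k - 2) + (-1) * (M * (Y / 4) ^ (2 * k - 4))
      - (K1 + (-1) * δ) * phik k (Y / 4) < 0 := by
    rw [limit_eq_aux k hk K0 K1 M δ hK1 (-1) (Y / 4) hqpos]
    have hTp := hTpos (Y / 4) hqpos
    nlinarith [hqid, mul_pos hMpos hBpos,
      mul_pos (show (0:ℝ) < K1 - δ by linarith) hTp]
  have case3 : K0 * Y ^ (2 * k - 2) + 1 * (M * Y ^ (2 * k - 4))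
      - (K1 + 1 * δ) * phik k Y < 0 := by
    rw [limit_eq_aux k hk K0 K1 M δ hK1 1 Y hYpos]
    have hTp := hTpos Y hYpos
    nlinarith [hYid, mul_pos hMpos hApos,
      mul_pos (show (0:ℝ) < K1 + δ by linarith) hTp]
  have case4 : 0 < K0 * Y ^ (2 * k - 2) + (-1) * (M * Y ^ (2 * k - 4))
      - (K1 + (-1) * δ) * phik k Y := by
    rw [limit_eq_aux k hk K0 K1 M δ hK1 (-1) Y hYpos]
    have hT := hTle Y hY1
    have hTp := hTpos Y hYpos
    nlinarith [hYid, mul_lt_mul_of_pos_right hMbig hApos,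
      mul_le_mul_of_nonneg_left hT (show (0:ℝ) ≤ K1 - δ by linarith),
      mul_pos h2kpos hApos,
      mul_pos hδ0 (mul_pos h2kpos hApos),
      mul_pos hδ0 hTp]
  have e1 := evgt (Y / 4) hqpos 1 case1
  have e2 := evlt (Y / 4) hqpos (-1) case2
  have e3 := evlt Y hYpos 1 case3
  have e4 := evgt Y hYpos (-1) case4
  obtain ⟨τδ, hτδ⟩ := eventually_atBot.mp ((e1.and e2).and (e3.and e4))
  refine ⟨τδ, fun τ hτ => ?_⟩
  obtain ⟨⟨a, b⟩, c, e⟩ := hτδ τ hτ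
  exact ⟨a, b, c, e⟩
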